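/- arXiv:1709.08279 — 3 statements merged into one kernel-verified Lean document; each statement's English description precedes it below -/
import Mathlib

section
/- Let 0 < p, q ≤ ∞ and define p̃, q̃ by 1/p̃ = 1 + 1/p and 1/q̃ = 1 + 1/q. Then for f ∈ L^{1,1}(ℝⁿ) and g in the Lorentz space L^{p,q}(ℝⁿ), the product fg belongs to L^{p̃,q̃}(ℝⁿ) and ‖fg‖_{L^{p̃,q̃}} ≲ ‖f‖_{L^{1,1}} ‖g‖_{L^{p,q}}, with implicit constant independent of f and g. -/
/-!
If `|f x g x| > f*(t) g*(s)` then `|f x| > f*(t)` or `|g x| > g*(s)`, so `(fg)*(2u) ≤ f*(u) g*(u)`.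
Substituting `t = 2u` in the `L^{p̃,q̃}` integral costs the factor `2^{r/p̃}`, `r = q̃`, and since
`1/p̃ = 1 + 1/p` the integrand becomes `(u f*(u))^r (u^{1/p} g*(u))^r du/u`. As `r = q/(q+1)`,
Hölder's inequality with exponents `1/r` and `1/(1-r)` bounds its integral by
`‖f‖_{L^{1,1}}^r ‖g‖_{L^{p,q}}^r`; for `q = ∞` (then `r = 1`) one bounds `u^{1/p} g*(u)` by its
supremum instead.
-/

open MeasureTheory
open scoped ENNReal NNReal

/-- The decreasing rearrangement of `f`. -/
noncomputable def rearr {n : ℕ} (f : EuclideanSpace ℝ (Fin n) → ℝ) (t : ℝ) : ℝ≥0∞ :=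
  sInf {s : ℝ≥0∞ | volume {x | s < ENNReal.ofReal |f x|} ≤ ENNReal.ofReal t}

/-- The Lorentz quasi-norm `‖f‖_{L^{p,q}} = ‖ t^{1/p} f*(t) ‖_{L^q((0,∞), dt/t)}`. -/
noncomputable def lorentzNorm {n : ℕ} (f : EuclideanSpace ℝ (Fin n) → ℝ) (p q : ℝ≥0∞) : ℝ≥0∞ :=
  if q = ∞ then ⨆ t ∈ Set.Ioi (0 : ℝ), ENNReal.ofReal t ^ p⁻¹.toReal * rearr f t
  else (∫⁻ t in Set.Ioi (0 : ℝ),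
      (ENNReal.ofReal t ^ p⁻¹.toReal * rearr f t) ^ q.toReal / ENNReal.ofReal t) ^ (1 / q.toReal)


open Set

lemma lintegral_Ioi_zero_eq_ofReal_mul_comp_mul_left (φ : ℝ → ℝ≥0∞) {c : ℝ} (hc : 0 < c) :
    ∫⁻ t in Ioi 0, φ t = ENNReal.ofReal c * ∫⁻ u in Ioi 0, φ (c * u) := by
  have := lintegral_image_eq_lintegral_abs_deriv_mul (measurableSet_Ioi (a := 0))
    (fun _ _ => (hasDerivAt_const_mul c).hasDerivWithinAt)
    (mul_right_injective₀ hc.ne').injOn φ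
  rw [image_const_mul_Ioi_zero hc] at this
  rw [this, ← lintegral_const_mul' _ _ ENNReal.ofReal_ne_top]
  simp [abs_of_pos hc]

lemma ENNReal.rpow_one_add_mul_rpow_div {x : ℝ≥0∞} (hx0 : x ≠ 0) (hx : x ≠ ∞) (a b : ℝ≥0∞)
    {β r : ℝ} (hr : 0 ≤ r) :
    (x ^ (1 + β) * (a * b)) ^ r / x = a ^ r * ((x ^ β * b) ^ r / x ^ (1 - r)) := by
  rw [ENNReal.rpow_add _ _ hx0 hx, ENNReal.rpow_one, ENNReal.rpow_sub _ _ hx0 hx,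
    ENNReal.rpow_one, show x * x ^ β * (a * b) = x * (a * (x ^ β * b)) by ring,
    ENNReal.mul_rpow_of_nonneg _ _ hr, ENNReal.mul_rpow_of_nonneg _ _ hr, div_eq_mul_inv,
    div_eq_mul_inv, ENNReal.inv_div (Or.inr hx) (Or.inr hx0), div_eq_mul_inv]
  ring

lemma ENNReal.toReal_eq_inv_one_add_of_inv_eq {q qt : ℝ≥0∞} (hq : 0 < q)
    (hqt : qt⁻¹ = 1 + q⁻¹) : qt.toReal = (1 + q⁻¹.toReal)⁻¹ := by
  rw [← inv_inv qt, hqt, ENNReal.toReal_inv,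
    ENNReal.toReal_add ENNReal.one_ne_top (ENNReal.inv_ne_top.2 hq.ne'), ENNReal.toReal_one]

section Lorentz

variable {n : ℕ} (f g : EuclideanSpace ℝ (Fin n) → ℝ)

lemma rearr_antitone : Antitone (rearr f) := fun _ _ hst =>
  sInf_le_sInf fun _ hs => hs.trans (ENNReal.ofReal_le_ofReal hst)

@[fun_prop]
lemma measurable_rearr : Measurable (rearr f) := (rearr_antitone f).measurable

lemma volume_rearr_lt_le (t : ℝ) :
    volume {x | rearr f t < ENNReal.ofReal |f x|} ≤ ENNReal.ofReal t := by
  obtain ⟨u, hu_anti, hu_tendsto, hu_mem⟩ := exists_seq_tendsto_sInf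
    (S := {s : ℝ≥0∞ | volume {x | s < ENNReal.ofReal |f x|} ≤ ENNReal.ofReal t})
    ⟨∞, by simp⟩ (OrderBot.bddBelow _)
  have hunion :
      {x | rearr f t < ENNReal.ofReal |f x|} = ⋃ k, {x | u k < ENNReal.ofReal |f x|} := by
    ext x
    simp only [mem_ofPred_eq, mem_iUnion]
    exact ⟨fun hx => (hu_tendsto.eventually_lt_const hx).exists,
      fun ⟨k, hk⟩ => (sInf_le (hu_mem k)).trans_lt hk⟩
  have hmono : Monotone fun k => {x | u k < ENNReal.ofReal |f x|} :=
    fun _ _ hij _ hx => (hu_anti hij).trans_lt hx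
  rw [hunion, hmono.measure_iUnion]
  exact iSup_le hu_mem

lemma rearr_mul_le {t s : ℝ} (ht : 0 ≤ t) (hs : 0 ≤ s) :
    rearr (fun x => f x * g x) (t + s) ≤ rearr f t * rearr g s := by
  refine sInf_le ?_
  show volume {x | rearr f t * rearr g s < ENNReal.ofReal |f x * g x|}
    ≤ ENNReal.ofReal (t + s)
  have hsub : {x | rearr f t * rearr g s < ENNReal.ofReal |f x * g x|} ⊆
      {x | rearr f t < ENNReal.ofReal |f x|} ∪ {x | rearr g s < ENNReal.ofReal |g x|} := by
    intro x hx
    simp only [mem_union, mem_ofPred_eq] at hx ⊢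
    by_contra! h
    rw [abs_mul, ENNReal.ofReal_mul (abs_nonneg _)] at hx
    exact hx.not_ge (mul_le_mul' h.1 h.2)
  calc _ ≤ volume {x | rearr f t < ENNReal.ofReal |f x|} +
        volume {x | rearr g s < ENNReal.ofReal |g x|} :=
        (measure_mono hsub).trans (measure_union_le _ _)
    _ ≤ ENNReal.ofReal t + ENNReal.ofReal s :=
        add_le_add (volume_rearr_lt_le f t) (volume_rearr_lt_le g s)
    _ = ENNReal.ofReal (t + s) := (ENNReal.ofReal_add ht hs).symm

lemma lorentzNorm_one_one : lorentzNorm f 1 1 = ∫⁻ t in Ioi 0, rearr f t := by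
  rw [lorentzNorm, if_neg ENNReal.one_ne_top]
  simp only [inv_one, ENNReal.toReal_one, ENNReal.rpow_one, div_one]
  refine setLIntegral_congr_fun measurableSet_Ioi fun t ht => ?_
  rw [mul_comm, mul_div_assoc, ENNReal.div_self (by simpa using ht) ENNReal.ofReal_ne_top,
    mul_one]

lemma rpow_mul_rearr_le_lorentzNorm_top (p : ℝ≥0∞) {t : ℝ} (ht : 0 < t) :
    ENNReal.ofReal t ^ p⁻¹.toReal * rearr g t ≤ lorentzNorm g p ∞ := by
  rw [lorentzNorm, if_pos rfl]
  exact le_biSup (fun t => ENNReal.ofReal t ^ p⁻¹.toReal * rearr g t) ht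

lemma lorentzNorm_rpow_toReal {p q : ℝ≥0∞} (hq0 : q ≠ 0) (hq : q ≠ ∞) :
    lorentzNorm g p q ^ q.toReal = ∫⁻ t in Ioi 0,
      (ENNReal.ofReal t ^ p⁻¹.toReal * rearr g t) ^ q.toReal / ENNReal.ofReal t := by
  rw [lorentzNorm, if_neg hq, ← ENNReal.rpow_mul, one_div,
    inv_mul_cancel₀ (ENNReal.toReal_ne_zero.2 ⟨hq0, hq⟩), ENNReal.rpow_one]

lemma lintegral_rearr_mul_le {α r : ℝ} (hα : 0 ≤ α) (hr : 0 ≤ r) :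
    ∫⁻ t in Ioi 0, (ENNReal.ofReal t ^ α * rearr (fun x => f x * g x) t) ^ r / ENNReal.ofReal t
      ≤ 2 ^ (α * r) * ∫⁻ u in Ioi 0,
        (ENNReal.ofReal u ^ α * (rearr f u * rearr g u)) ^ r / ENNReal.ofReal u := by
  rw [lintegral_Ioi_zero_eq_ofReal_mul_comp_mul_left _ two_pos, ENNReal.ofReal_ofNat,
    ← lintegral_const_mul' _ _ ENNReal.ofNat_ne_top,
    ← lintegral_const_mul' _ _
      (ENNReal.rpow_ne_top_of_nonneg (by positivity) ENNReal.ofNat_ne_top)]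
  refine setLIntegral_mono' measurableSet_Ioi fun u hu => ?_
  have hrearr : rearr (fun x => f x * g x) (2 * u) ≤ rearr f u * rearr g u := by
    simpa only [two_mul] using rearr_mul_le f g (le_of_lt hu) (le_of_lt hu)
  have hscale : ∀ x y : ℝ≥0∞, 2 * (((2 * x) ^ α * y) ^ r / (2 * x))
      = 2 ^ (α * r) * ((x ^ α * y) ^ r / x) := fun x y => by
    rw [ENNReal.mul_rpow_of_nonneg _ _ hα, mul_assoc, ENNReal.mul_rpow_of_nonneg _ _ hr,
      ← ENNReal.rpow_mul, div_eq_mul_inv, div_eq_mul_inv,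
      ENNReal.mul_inv (Or.inl two_ne_zero) (Or.inl ENNReal.ofNat_ne_top)]
    calc _ = (2 * 2⁻¹) * (2 ^ (α * r) * ((x ^ α * y) ^ r * x⁻¹)) := by ring
      _ = _ := by rw [ENNReal.mul_inv_cancel two_ne_zero ENNReal.ofNat_ne_top, one_mul]
  rw [ENNReal.ofReal_mul zero_le_two, ENNReal.ofReal_ofNat, ← hscale]
  gcongr

lemma lintegral_rearr_mul_rearr_le_lorentzNorm {p q qt : ℝ≥0∞} (hq : 0 < q)
    (hqt : qt⁻¹ = 1 + q⁻¹) :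
    ∫⁻ u in Ioi 0, (ENNReal.ofReal u ^ (1 + p⁻¹.toReal) * (rearr f u * rearr g u)) ^ qt.toReal
        / ENNReal.ofReal u
      ≤ (lorentzNorm f 1 1 * lorentzNorm g p q) ^ qt.toReal := by
  have hr := ENNReal.toReal_eq_inv_one_add_of_inv_eq hq hqt
  set r := qt.toReal
  set B : ℝ → ℝ≥0∞ := fun u => ENNReal.ofReal u ^ p⁻¹.toReal * rearr g u
  have hr0 : 0 ≤ r := ENNReal.toReal_nonneg
  rw [setLIntegral_congr_fun measurableSet_Ioi fun u (hu : 0 < u) =>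
    ENNReal.rpow_one_add_mul_rpow_div (ENNReal.ofReal_pos.2 hu).ne' ENNReal.ofReal_ne_top _ _ hr0]
  rcases eq_or_ne q ∞ with rfl | hq_top
  · have hr1 : r = 1 := by simp [hr]
    simp only [hr1, ENNReal.rpow_one, sub_self, ENNReal.rpow_zero, div_one]
    calc ∫⁻ u in Ioi 0, rearr f u * B u
        ≤ ∫⁻ u in Ioi 0, rearr f u * lorentzNorm g p ∞ :=
          setLIntegral_mono' measurableSet_Ioi fun u hu => by
            gcongr
            exact rpow_mul_rearr_le_lorentzNorm_top g p hu
      _ = _ := by rw [lintegral_mul_const _ (measurable_rearr f), lorentzNorm_one_one]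
  · have hs : 0 < q.toReal := ENNReal.toReal_pos hq.ne' hq_top
    have hsr : q.toReal * (1 - r) = r := by
      rw [hr, ENNReal.toReal_inv]
      field_simp
      ring
    have hr_le_one : r ≤ 1 := by
      rw [hr]
      exact inv_le_one_of_one_le₀ (by linarith [ENNReal.toReal_nonneg (a := q⁻¹)])
    calc ∫⁻ u in Ioi 0, rearr f u ^ r * (B u ^ r / ENNReal.ofReal u ^ (1 - r))
        = ∫⁻ u in Ioi 0, rearr f u ^ r * (B u ^ q.toReal / ENNReal.ofReal u) ^ (1 - r) := by
          congr! 3 with u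
          rw [ENNReal.div_rpow_of_nonneg _ _ (by linarith), ← ENNReal.rpow_mul, hsr]
      _ ≤ (∫⁻ u in Ioi 0, rearr f u) ^ r
          * (∫⁻ u in Ioi 0, B u ^ q.toReal / ENNReal.ofReal u) ^ (1 - r) :=
          ENNReal.lintegral_mul_norm_pow_le (by fun_prop) (by fun_prop) hr0 (by linarith)
            (by ring)
      _ = _ := by
          rw [← lorentzNorm_one_one, ← lorentzNorm_rpow_toReal g hq.ne' hq_top,
            ← ENNReal.rpow_mul, hsr, ENNReal.mul_rpow_of_nonneg _ _ hr0]

lemma lorentzNorm_mul_le {p q pt qt : ℝ≥0∞} (hp : 0 < p) (hq : 0 < q) (hpt : pt⁻¹ = 1 + p⁻¹)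
    (hqt : qt⁻¹ = 1 + q⁻¹) :
    lorentzNorm (fun x => f x * g x) pt qt
      ≤ 2 ^ pt⁻¹.toReal * lorentzNorm f 1 1 * lorentzNorm g p q := by
  have hα : pt⁻¹.toReal = 1 + p⁻¹.toReal := by
    rw [hpt, ENNReal.toReal_add ENNReal.one_ne_top (ENNReal.inv_ne_top.2 hp.ne'),
      ENNReal.toReal_one]
  have hr : 0 < qt.toReal := by
    rw [ENNReal.toReal_eq_inv_one_add_of_inv_eq hq hqt]
    positivity
  rw [lorentzNorm, if_neg (ENNReal.toReal_pos_iff.1 hr).2.ne]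
  calc _ ≤ (2 ^ (pt⁻¹.toReal * qt.toReal)
        * (lorentzNorm f 1 1 * lorentzNorm g p q) ^ qt.toReal) ^ (1 / qt.toReal) := by
        gcongr
        refine (lintegral_rearr_mul_le f g ENNReal.toReal_nonneg hr.le).trans ?_
        gcongr
        rw [hα]
        exact lintegral_rearr_mul_rearr_le_lorentzNorm f g hq hqt
    _ = 2 ^ pt⁻¹.toReal * lorentzNorm f 1 1 * lorentzNorm g p q := by
        rw [ENNReal.mul_rpow_of_nonneg _ _ (by positivity), ← ENNReal.rpow_mul,
          ← ENNReal.rpow_mul, mul_assoc, mul_one_div_cancel hr.ne', mul_one, ENNReal.rpow_one,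
          mul_assoc]

end Lorentz

/-- Let `0 < p, q ≤ ∞` and `1/p̃ = 1 + 1/p`, `1/q̃ = 1 + 1/q`.  For `f ∈ L^{1,1}(ℝⁿ)` and
`g ∈ L^{p,q}(ℝⁿ)`, the product `fg` belongs to `L^{p̃,q̃}(ℝⁿ)` with
`‖fg‖_{L^{p̃,q̃}} ≲ ‖f‖_{L^{1,1}} ‖g‖_{L^{p,q}}`, constant independent of `f` and `g`. -/
theorem stmt_1 {n : ℕ} (p q pt qt : ℝ≥0∞) (hp : 0 < p) (hq : 0 < q)
    (hpt : pt⁻¹ = 1 + p⁻¹) (hqt : qt⁻¹ = 1 + q⁻¹) :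
    ∃ C : ℝ≥0∞, 0 < C ∧ C < ∞ ∧
      ∀ f g : EuclideanSpace ℝ (Fin n) → ℝ, Measurable f → Measurable g →
        lorentzNorm f 1 1 ≠ ∞ → lorentzNorm g p q ≠ ∞ →
        lorentzNorm (fun x => f x * g x) pt qt ≠ ∞ ∧
        lorentzNorm (fun x => f x * g x) pt qt ≤ C * lorentzNorm f 1 1 * lorentzNorm g p q := by
  have hC : (2 : ℝ≥0∞) ^ pt⁻¹.toReal ≠ ∞ :=
    ENNReal.rpow_ne_top_of_nonneg ENNReal.toReal_nonneg ENNReal.ofNat_ne_top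
  refine ⟨2 ^ pt⁻¹.toReal, ENNReal.rpow_pos two_pos ENNReal.ofNat_ne_top, hC.lt_top,
    fun f g _ _ hf hg => ?_⟩
  have hbound := lorentzNorm_mul_le f g hp hq hpt hqt
  exact ⟨ne_top_of_le_ne_top (ENNReal.mul_ne_top (ENNReal.mul_ne_top hC hf) hg) hbound, hbound⟩
end

section
/- Let Ω : ℝⁿ \ {0} → ℝ be homogeneous of degree zero and Lipschitz on the unit sphere S^{n-1}. Then for Q₀ = [-1/2,1/2]ⁿ, the quantity sup_{x ∈ Q₀} ∫_{Q₀} |Ω(x - y + h) - Ω(x + h)| dy tends to 0 as |h| → ∞. -/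
/-! Since `Ω` only sees directions, `|Ω a - Ω b|` is controlled by the distance of the
normalized vectors, which is at most `2 ‖a - b‖ / ‖a‖`.  For `x, y ∈ Q₀` the points `x + h` and
`x - y + h` are at distance `‖y‖ ≤ √n / 2` while `‖x + h‖ ≥ ‖h‖ - √n / 2`, so the integrand is
uniformly `O(1 / ‖h‖)` on a cube of volume one. -/

open MeasureTheory
open scoped ENNReal NNReal

/-- The unit cube `Q₀ = [-1/2, 1/2]ⁿ`. -/
def unitCube (n : ℕ) : Set (EuclideanSpace ℝ (Fin n)) :=
  {x | ∀ i, |x i| ≤ 1 / 2}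

section Normalize

variable {E : Type*} [NormedAddCommGroup E] [NormedSpace ℝ E]

theorem norm_inv_norm_smul_sub_inv_norm_smul_le {a b : E} (ha : a ≠ 0) (hb : b ≠ 0) :
    ‖‖a‖⁻¹ • a - ‖b‖⁻¹ • b‖ ≤ 2 * ‖a - b‖ / ‖a‖ := by
  have ha' : ‖a‖ ≠ 0 := norm_ne_zero_iff.mpr ha
  have hb' : ‖b‖ ≠ 0 := norm_ne_zero_iff.mpr hb
  have hcoef : ‖a‖⁻¹ * (‖b‖ - ‖a‖) * ‖b‖⁻¹ = ‖a‖⁻¹ - ‖b‖⁻¹ := by field_simp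
  have hsplit : ‖a‖⁻¹ • a - ‖b‖⁻¹ • b = ‖a‖⁻¹ • ((a - b) + (‖b‖ - ‖a‖) • ‖b‖⁻¹ • b) := by
    rw [smul_add, smul_smul, smul_smul, hcoef, smul_sub, sub_smul]
    abel
  have hb1 : ‖‖b‖⁻¹ • b‖ = 1 := norm_smul_inv_norm hb
  rw [hsplit, norm_smul, norm_inv, norm_norm, inv_mul_eq_div]
  gcongr
  calc ‖(a - b) + (‖b‖ - ‖a‖) • ‖b‖⁻¹ • b‖
      ≤ ‖a - b‖ + |‖b‖ - ‖a‖| := by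
        refine (norm_add_le _ _).trans_eq ?_
        rw [norm_smul, hb1, Real.norm_eq_abs, mul_one]
    _ ≤ 2 * ‖a - b‖ := by
        have := abs_norm_sub_norm_le b a
        rw [norm_sub_rev] at this
        linarith

theorem abs_sub_le_of_homogeneous_of_lipschitz_sphere {Ω : E → ℝ} {L : ℝ}
    (hhom : ∀ t : ℝ, 0 < t → ∀ x : E, x ≠ 0 → Ω (t • x) = Ω x)
    (hlip : ∀ x z : E, ‖x‖ = 1 → ‖z‖ = 1 → |Ω x - Ω z| ≤ L * ‖x - z‖)
    {a b : E} (ha : a ≠ 0) (hb : b ≠ 0) :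
    |Ω a - Ω b| ≤ 2 * |L| * ‖a - b‖ / ‖a‖ := by
  rw [← hhom ‖a‖⁻¹ (by positivity) a ha, ← hhom ‖b‖⁻¹ (by positivity) b hb]
  calc |Ω (‖a‖⁻¹ • a) - Ω (‖b‖⁻¹ • b)|
      ≤ L * ‖‖a‖⁻¹ • a - ‖b‖⁻¹ • b‖ :=
        hlip _ _ (norm_smul_inv_norm ha) (norm_smul_inv_norm hb)
    _ ≤ |L| * (2 * ‖a - b‖ / ‖a‖) := by
        gcongr
        · exact le_abs_self L
        · exact norm_inv_norm_smul_sub_inv_norm_smul_le ha hb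
    _ = 2 * |L| * ‖a - b‖ / ‖a‖ := by ring

end Normalize

theorem norm_le_of_mem_unitCube {n : ℕ} {x : EuclideanSpace ℝ (Fin n)} (hx : x ∈ unitCube n) :
    ‖x‖ ≤ Real.sqrt n / 2 := by
  have hsum : ∑ i, ‖x i‖ ^ 2 ≤ ∑ _i : Fin n, (1 / 2 : ℝ) ^ 2 :=
    Finset.sum_le_sum fun i _ => by
      rw [Real.norm_eq_abs]
      exact pow_le_pow_left₀ (abs_nonneg _) (hx i) 2
  rw [EuclideanSpace.norm_eq]
  calc Real.sqrt (∑ i, ‖x i‖ ^ 2) ≤ Real.sqrt (∑ _i : Fin n, (1 / 2 : ℝ) ^ 2) :=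
        Real.sqrt_le_sqrt hsum
    _ = Real.sqrt n / 2 := by
        rw [Finset.sum_const, Finset.card_univ, Fintype.card_fin, nsmul_eq_mul,
          Real.sqrt_mul (Nat.cast_nonneg n), Real.sqrt_sq (by norm_num)]
        ring

theorem volume_unitCube (n : ℕ) : volume (unitCube n) = 1 := by
  have hpi : unitCube n = (MeasurableEquiv.toLp 2 (Fin n → ℝ)).symm ⁻¹'
      Set.univ.pi fun _ => Set.Icc (-(1 / 2) : ℝ) (1 / 2) := by
    ext x
    simp only [unitCube, Set.mem_ofPred_eq, Set.mem_preimage, Set.mem_univ_pi, Set.mem_Icc,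
      abs_le]
    rfl
  rw [hpi, (EuclideanSpace.volume_preserving_symm_measurableEquiv_toLp (Fin n)).measure_preimage
    (by measurability), volume_pi_pi]
  norm_num [Real.volume_Icc]

theorem setLIntegral_unitCube_le {n : ℕ} {f : EuclideanSpace ℝ (Fin n) → ℝ≥0∞} {c : ℝ≥0∞}
    (hf : ∀ y ∈ unitCube n, f y ≤ c) : ∫⁻ y in unitCube n, f y ≤ c :=
  calc ∫⁻ y in unitCube n, f y ≤ ∫⁻ _ in unitCube n, c := setLIntegral_mono measurable_const hf
    _ = c := by rw [setLIntegral_const, volume_unitCube, mul_one]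

/-- Let `Ω : ℝⁿ \ {0} → ℝ` be homogeneous of degree zero and Lipschitz on the unit
sphere.  Then `sup_{x ∈ Q₀} ∫_{Q₀} |Ω(x - y + h) - Ω(x + h)| dy → 0` as `|h| → ∞`. -/
theorem stmt_9 {n : ℕ} (Ω : EuclideanSpace ℝ (Fin n) → ℝ) (L : ℝ)
    (hhom : ∀ t : ℝ, 0 < t → ∀ x : EuclideanSpace ℝ (Fin n), x ≠ 0 → Ω (t • x) = Ω x)
    (hlip : ∀ x z : EuclideanSpace ℝ (Fin n), ‖x‖ = 1 → ‖z‖ = 1 → |Ω x - Ω z| ≤ L * ‖x - z‖) :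
    ∀ ε : ℝ, 0 < ε → ∃ M : ℝ, ∀ h : EuclideanSpace ℝ (Fin n), M ≤ ‖h‖ →
      (⨆ x ∈ unitCube n, ∫⁻ y in unitCube n,
          ENNReal.ofReal |Ω (x - y + h) - Ω (x + h)|) ≤ ENNReal.ofReal ε := by
  intro ε hε
  have hs : 0 ≤ Real.sqrt n := Real.sqrt_nonneg n
  have hK : 0 ≤ |L| * Real.sqrt n / ε := by positivity
  refine ⟨Real.sqrt n + 1 + |L| * Real.sqrt n / ε, fun h hM =>
    iSup₂_le fun x hx => setLIntegral_unitCube_le fun y hy => ENNReal.ofReal_le_ofReal ?_⟩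
  have hx' := norm_le_of_mem_unitCube hx
  have hy' := norm_le_of_mem_unitCube hy
  have hxh : 1 + |L| * Real.sqrt n / ε ≤ ‖x + h‖ := by
    have := norm_sub_le (x + h) x
    rw [add_sub_cancel_left] at this
    linarith
  have hxyh : 0 < ‖x - y + h‖ := by
    have := norm_sub_le (x - y + h) (x - y)
    rw [add_sub_cancel_left] at this
    linarith [norm_sub_le x y]
  have hxh0 : 0 < ‖x + h‖ := by linarith
  rw [abs_sub_comm]
  calc |Ω (x + h) - Ω (x - y + h)|
      ≤ 2 * |L| * ‖(x + h) - (x - y + h)‖ / ‖x + h‖ :=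
        abs_sub_le_of_homogeneous_of_lipschitz_sphere hhom hlip
          (norm_pos_iff.mp hxh0) (norm_pos_iff.mp hxyh)
    _ ≤ ε := by
        rw [add_sub_add_right_eq_sub, sub_sub_cancel, div_le_iff₀ hxh0]
        calc 2 * |L| * ‖y‖ ≤ |L| * Real.sqrt n := by nlinarith [abs_nonneg L]
          _ ≤ ε * (1 + |L| * Real.sqrt n / ε) := by
            rw [mul_add, mul_div_cancel₀ _ hε.ne']
            linarith
          _ ≤ ε * ‖x + h‖ := by gcongr
end

section
/- Let b be locally integrable on ℝⁿ and let Q be a cube. Define φ(x) = (sgn(b(x) - b_Q) - |Q|^{-1}∫_Q sgn(b(y) - b_Q) dy) χ_Q(x), where b_Q = |Q|^{-1}∫_Q b. Then |φ| ≤ 2χ_Q, (b - b_Q)φ ≥ 0 on ℝⁿ, ∫ φ = 0, and ∫_Q (b(y) - b_Q) φ(y) dy = ∫_Q |b(y) - b_Q| dy. -/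
open MeasureTheory
open scoped ENNReal NNReal

/-!
On `Q`, `φ = sgn g - ⨍_Q sgn g` with `g = b - b_Q`. The average of `sgn g` has modulus at most `1`,
so `g φ ≥ |g| - |g| ≥ 0` pointwise; and since `g` has mean zero on `Q`, the constant part of `φ`
contributes nothing to `∫_Q g φ`, which is therefore `∫_Q g sgn g = ∫_Q |g|`.
-/

/-- A cube in `ℝⁿ` with sides parallel to the axes, lower corner `a`, side length `r`. -/
def cube (n : ℕ) (a : EuclideanSpace ℝ (Fin n)) (r : ℝ) : Set (EuclideanSpace ℝ (Fin n)) :=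
  {x | ∀ i, a i ≤ x i ∧ x i ≤ a i + r}

namespace Real

lemma abs_sign_le_one (t : ℝ) : |Real.sign t| ≤ 1 := by
  rcases Real.sign_apply_eq t with h | h | h <;> simp [h]

lemma self_mul_sign (t : ℝ) : t * Real.sign t = |t| := by
  rcases lt_trichotomy t 0 with h | rfl | h
  · rw [Real.sign_of_neg h, abs_of_neg h, mul_neg_one]
  · simp
  · rw [Real.sign_of_pos h, abs_of_pos h, mul_one]

end Real

lemma isCompact_cube (n : ℕ) (a : EuclideanSpace ℝ (Fin n)) (r : ℝ) :
    IsCompact (cube n a r) := by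
  have h : cube n a r = (PiLp.continuousLinearEquiv 2 ℝ (fun _ : Fin n => ℝ)).toHomeomorph ⁻¹'
      (Set.univ.pi fun i => Set.Icc (a i) (a i + r)) := by
    ext x
    simp [cube, Set.mem_Icc, Pi.le_def, forall_and]
  rw [h]
  exact (ContinuousLinearEquiv.toHomeomorph _).isCompact_preimage.mpr
    (isCompact_univ_pi fun i => isCompact_Icc)

section CenteredSign

variable {α : Type*} [MeasurableSpace α] {μ : Measure α}

lemma norm_average_le_of_norm_le_const {E : Type*} [NormedAddCommGroup E] [NormedSpace ℝ E]
    [IsFiniteMeasure μ] {f : α → E} {C : ℝ} (hC : 0 ≤ C) (h : ∀ᵐ x ∂μ, ‖f x‖ ≤ C) :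
    ‖⨍ x, f x ∂μ‖ ≤ C := by
  rw [average_eq, norm_smul, norm_inv, Real.norm_of_nonneg measureReal_nonneg]
  calc (μ.real Set.univ)⁻¹ * ‖∫ x, f x ∂μ‖
      ≤ (μ.real Set.univ)⁻¹ * (C * μ.real Set.univ) :=
        mul_le_mul_of_nonneg_left (norm_integral_le_of_norm_le_const h)
          (inv_nonneg.mpr measureReal_nonneg)
    _ ≤ C := by
        rw [mul_left_comm]
        exact mul_le_of_le_one_right hC (inv_mul_le_one_of_le₀ le_rfl measureReal_nonneg)

/-- The paper's `φ` on `Q`, for `μ` the restriction to `Q` and `g = b - b_Q`. -/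
noncomputable def centeredSign (μ : Measure α) (g : α → ℝ) (x : α) : ℝ :=
  Real.sign (g x) - ⨍ y, Real.sign (g y) ∂μ

lemma integral_mul_centeredSign {g : α → ℝ} (hg : Integrable g μ) (hg₀ : ∫ x, g x ∂μ = 0) :
    ∫ x, g x * centeredSign μ g x ∂μ = ∫ x, |g x| ∂μ := by
  set s := ⨍ y, Real.sign (g y) ∂μ
  have hpoint : ∀ x, g x * centeredSign μ g x = |g x| - s * g x := fun x => by
    rw [centeredSign, mul_sub, Real.self_mul_sign, mul_comm]
  simp_rw [hpoint]
  rw [integral_sub hg.abs (hg.const_mul s), integral_const_mul, hg₀, mul_zero, sub_zero]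

variable [IsFiniteMeasure μ] (g : α → ℝ)

lemma abs_average_sign_le_one : |⨍ y, Real.sign (g y) ∂μ| ≤ 1 :=
  norm_average_le_of_norm_le_const (f := fun y => Real.sign (g y)) zero_le_one
    (.of_forall fun y => Real.abs_sign_le_one (g y))

lemma abs_centeredSign_le_two (x : α) : |centeredSign μ g x| ≤ 2 :=
  calc |centeredSign μ g x| ≤ |Real.sign (g x)| + |⨍ y, Real.sign (g y) ∂μ| := abs_sub _ _
    _ ≤ 1 + 1 := add_le_add (Real.abs_sign_le_one _) (abs_average_sign_le_one g)
    _ = 2 := one_add_one_eq_two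

lemma mul_centeredSign_nonneg (x : α) : 0 ≤ g x * centeredSign μ g x := by
  rw [centeredSign, mul_sub, Real.self_mul_sign, sub_nonneg]
  calc g x * ⨍ y, Real.sign (g y) ∂μ ≤ |g x| * |⨍ y, Real.sign (g y) ∂μ| :=
        (le_abs_self _).trans (abs_mul _ _).le
    _ ≤ |g x| := mul_le_of_le_one_right (abs_nonneg _) (abs_average_sign_le_one g)

lemma integral_centeredSign : ∫ x, centeredSign μ g x ∂μ = 0 :=
  integral_sub_average μ _

end CenteredSign

theorem stmt_14_general {n : ℕ} (b : EuclideanSpace ℝ (Fin n) → ℝ)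
    (hb : LocallyIntegrable b volume)
    (a : EuclideanSpace ℝ (Fin n)) (r : ℝ)
    (bQ : ℝ)
    (hbQ : bQ = (volume (cube n a r)).toReal⁻¹ * ∫ y in cube n a r, b y)
    (φ : EuclideanSpace ℝ (Fin n) → ℝ)
    (hφ : φ = fun x =>
      (Real.sign (b x - bQ) -
        (volume (cube n a r)).toReal⁻¹ * ∫ y in cube n a r, Real.sign (b y - bQ)) *
        Set.indicator (cube n a r) (fun _ => (1 : ℝ)) x) :
    (∀ x, |φ x| ≤ 2 * Set.indicator (cube n a r) (fun _ => (1 : ℝ)) x) ∧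
    (∀ x, 0 ≤ (b x - bQ) * φ x) ∧
    (∫ x, φ x) = 0 ∧
    (∫ x in cube n a r, (b x - bQ) * φ x) = ∫ x in cube n a r, |b x - bQ| := by
  set Q := cube n a r
  have hQ : IsCompact Q := isCompact_cube n a r
  have hQmeas : MeasurableSet Q := hQ.isClosed.measurableSet
  have : Fact (volume Q < ∞) := ⟨hQ.measure_lt_top⟩
  set g := fun x => b x - bQ
  have hbQ_avg : bQ = ⨍ y in Q, b y := by rw [hbQ, setAverage_eq, smul_eq_mul, measureReal_def]
  have hg : IntegrableOn g Q :=
    (hb.integrableOn_isCompact hQ).sub (integrableOn_const hQ.measure_ne_top)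
  have hg₀ : ∫ x in Q, g x = 0 := by
    simp only [g, hbQ_avg]
    exact setAverage_sub_setAverage hQ.measure_ne_top b
  have hφQ : φ = Q.indicator (centeredSign (volume.restrict Q) g) := by
    ext x
    by_cases hx : x ∈ Q <;>
      simp [hφ, hx, centeredSign, g, setAverage_eq, measureReal_def]
  subst hφQ
  refine ⟨fun x => ?_, fun x => ?_, ?_, ?_⟩
  · by_cases hx : x ∈ Q
    · simpa [hx] using abs_centeredSign_le_two g x
    · simp [hx]
  · by_cases hx : x ∈ Q
    · simpa [hx] using mul_centeredSign_nonneg g x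
    · simp [hx]
  · rw [integral_indicator hQmeas, integral_centeredSign]
  · rw [← integral_mul_centeredSign hg hg₀]
    refine setIntegral_congr_fun hQmeas fun x hx => ?_
    simp [hx, g]

/-- Let `b` be locally integrable and `Q` a cube; with `b_Q = |Q|⁻¹ ∫_Q b` and
`φ(x) = (sgn(b(x) - b_Q) - |Q|⁻¹ ∫_Q sgn(b(y) - b_Q) dy) χ_Q(x)` one has
`|φ| ≤ 2χ_Q`, `(b - b_Q)φ ≥ 0`, `∫ φ = 0`, and
`∫_Q (b - b_Q)φ = ∫_Q |b - b_Q|`. -/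
theorem stmt_14 {n : ℕ} (b : EuclideanSpace ℝ (Fin n) → ℝ)
    (hb : LocallyIntegrable b volume)
    (a : EuclideanSpace ℝ (Fin n)) (r : ℝ) (hr : 0 < r)
    (bQ : ℝ)
    (hbQ : bQ = (volume (cube n a r)).toReal⁻¹ * ∫ y in cube n a r, b y)
    (φ : EuclideanSpace ℝ (Fin n) → ℝ)
    (hφ : φ = fun x =>
      (Real.sign (b x - bQ) -
        (volume (cube n a r)).toReal⁻¹ * ∫ y in cube n a r, Real.sign (b y - bQ)) *
        Set.indicator (cube n a r) (fun _ => (1 : ℝ)) x) :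
    (∀ x, |φ x| ≤ 2 * Set.indicator (cube n a r) (fun _ => (1 : ℝ)) x) ∧
    (∀ x, 0 ≤ (b x - bQ) * φ x) ∧
    (∫ x, φ x) = 0 ∧
    (∫ x in cube n a r, (b x - bQ) * φ x) = ∫ x in cube n a r, |b x - bQ| :=
  stmt_14_general b hb a r bQ hbQ φ hφ
end
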